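/- For all even integers m ≥ 4 and all integers n ≥ 2, k ≥ 2 with m − k ≥ 1, the signed generalized book graph (B(m,n,k),σ_n), where σ_n has negative edge set {v₁u₁ⁱ : 1 ≤ i ≤ n}, satisfies χ'(B(m,n,k),σ_n) = n+1. -/

import Mathlib

open scoped Classical

/-- The color set `M_q`: for `q = 2r`, `{±1, …, ±r}`; for `q = 2r+1`, `{0, ±1, …, ±r}`. -/
def colorSet (q : ℕ) : Set ℤ :=
  {c : ℤ | c.natAbs ≤ q / 2 ∧ (Even q → c ≠ 0)}

/-- A proper `q`-edge coloring of the signed graph `(G, σ)`, given as an assignment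
`γ v w` of a color to the incidence `(v, vw)`. -/
def IsProperSignedEdgeColoring {V : Type*} (G : SimpleGraph V)
    (σ : Sym2 V → ℤˣ) (q : ℕ) (γ : V → V → ℤ) : Prop :=
  (∀ ⦃v w : V⦄, G.Adj v w → γ v w ∈ colorSet q) ∧
  (∀ ⦃v w : V⦄, G.Adj v w → γ v w = (-(σ s(v, w) : ℤ)) * γ w v) ∧
  (∀ ⦃v w₁ w₂ : V⦄, G.Adj v w₁ → G.Adj v w₂ → w₁ ≠ w₂ → γ v w₁ ≠ γ v w₂)

/-- The chromatic index of a signed graph: the least `q` admitting a proper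
`q`-edge coloring. -/
noncomputable def signedChromaticIndex {V : Type*} (G : SimpleGraph V)
    (σ : Sym2 V → ℤˣ) : ℕ :=
  sInf {q : ℕ | ∃ γ : V → V → ℤ, IsProperSignedEdgeColoring G σ q γ}

/-- Vertices of the generalized book graph `B(m,n,k)`: the spine path `v₁ … v_k`
(`Sum.inl`) together with the internal vertices `u_j^i` of the `n` pages (`Sum.inr`). -/
abbrev BookVertex (m n k : ℕ) : Type := Fin k ⊕ Fin n × Fin (m - k)

/-- The generalized book graph `B(m,n,k)`: `n` cycles of length `m` sharing the
common path `v₁ v₂ ⋯ v_k`, the `i`-th cycle being `v₁ u₁ⁱ u₂ⁱ ⋯ u_{m-k}ⁱ v_k ⋯ v₂ v₁`. -/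
def bookGraph (m n k : ℕ) : SimpleGraph (BookVertex m n k) :=
  SimpleGraph.fromRel (fun x y =>
    match x, y with
    | Sum.inl a, Sum.inl b => (b : ℕ) = (a : ℕ) + 1
    | Sum.inl a, Sum.inr p =>
        ((a : ℕ) = 0 ∧ (p.2 : ℕ) = 0) ∨ ((a : ℕ) = k - 1 ∧ (p.2 : ℕ) = m - k - 1)
    | Sum.inr p, Sum.inr p' => p.1 = p'.1 ∧ (p'.2 : ℕ) = (p.2 : ℕ) + 1
    | Sum.inr _, Sum.inl _ => False)

/-- The signature `σ_l` on `B(m,n,k)` whose negative edges are exactly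
`v₁u₁ⁱ` for `1 ≤ i ≤ l`. -/
noncomputable def bookSigma (m n k l : ℕ) (hk : 0 < k) (hmk : 0 < m - k) :
    Sym2 (BookVertex m n k) → ℤˣ :=
  fun e =>
    if ∃ i : Fin n, (i : ℕ) < l ∧
        e = s(Sum.inl (⟨0, hk⟩ : Fin k),
              Sum.inr ((i, ⟨0, hmk⟩) : Fin n × Fin (m - k)))
    then -1 else 1

/-!
At a vertex the colours of the incident edges are distinct elements of `M_q`, which has `q`
elements, so `χ' ≥ n + 1 = deg v₁`. Conversely, enumerate `M_{n+1} \ {1}` as `c 0, …, c (n-1)`,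
colour the spine `1` in the direction `v₁ → v_k`, let page `i` leave `v₁` with colour `c i` and
reach `v_k` by an edge coloured `c (i + 1 mod n)` at its page end. The shift makes the two end
colours of a page differ, which is what a page with a single internal vertex needs, and the
interior of every page can then be coloured by a constant `±1`.
-/

open Finset

section ColorSet

variable {q : ℕ}

noncomputable def colorFinset (q : ℕ) : Finset ℤ :=
  if Even q then (Icc (-(q / 2 : ℤ)) (q / 2)).erase 0 else Icc (-(q / 2 : ℤ)) (q / 2)

lemma mem_colorFinset {c : ℤ} : c ∈ colorFinset q ↔ c ∈ colorSet q := by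
  unfold colorFinset colorSet
  split_ifs with hq <;> simp [hq] <;> omega

lemma card_colorFinset (q : ℕ) : #(colorFinset q) = q := by
  unfold colorFinset
  split_ifs with hq
  · rw [card_erase_of_mem (by simp; omega), Int.card_Icc]
    obtain ⟨r, rfl⟩ := hq
    omega
  · rw [Int.card_Icc]
    obtain ⟨r, rfl⟩ := Nat.not_even_iff_odd.mp hq
    omega

lemma one_mem_colorSet (hq : 2 ≤ q) : (1 : ℤ) ∈ colorSet q :=
  ⟨by rw [Int.natAbs_one]; omega, fun _ => one_ne_zero⟩

@[simp] lemma neg_mem_colorSet_iff {c : ℤ} : -c ∈ colorSet q ↔ c ∈ colorSet q := by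
  simp [colorSet]

end ColorSet

section SignedGraph

variable {V : Type*} {G : SimpleGraph V} {σ : Sym2 V → ℤˣ} {q : ℕ} {γ : V → V → ℤ}

lemma IsProperSignedEdgeColoring.degree_le (hγ : IsProperSignedEdgeColoring G σ q γ) (v : V)
    [Fintype (G.neighborSet v)] : G.degree v ≤ q := by
  obtain ⟨hmem, -, hinj⟩ := hγ
  have hinjOn : Set.InjOn (γ v) (G.neighborFinset v) := fun w₁ hw₁ w₂ hw₂ h => by
    by_contra hne
    exact hinj (by simpa using hw₁) (by simpa using hw₂) hne h
  calc G.degree v = #((G.neighborFinset v).image (γ v)) := (card_image_of_injOn hinjOn).symm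
    _ ≤ #(colorFinset q) := card_le_card fun c hc => by
        obtain ⟨w, hw, rfl⟩ := mem_image.mp hc
        exact mem_colorFinset.mpr (hmem (by simpa using hw))
    _ = q := card_colorFinset q

lemma signedChromaticIndex_eq (hγ : IsProperSignedEdgeColoring G σ q γ)
    (hle : ∀ q' γ', IsProperSignedEdgeColoring G σ q' γ' → q ≤ q') :
    signedChromaticIndex G σ = q :=
  le_antisymm (Nat.sInf_le ⟨γ, hγ⟩) (le_csInf ⟨q, γ, hγ⟩ fun _ ⟨γ', hγ'⟩ => hle _ γ' hγ')

end SignedGraph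

def pathColor (x : ℤ) : ℤ := if x = -1 then -1 else 1

lemma pathColor_ne_zero (x : ℤ) : pathColor x ≠ 0 := by
  unfold pathColor; split_ifs <;> decide

lemma pathColor_ne_neg (x : ℤ) : pathColor x ≠ -x := by
  unfold pathColor; split_ifs <;> omega

lemma pathColor_ne {x y : ℤ} (hy : y ≠ 1) (hxy : x ≠ y) : pathColor x ≠ y := by
  unfold pathColor; split_ifs <;> omega

section Book

variable {m n k : ℕ}

@[simp] lemma bookGraph_adj_inl_inl {a b : Fin k} :
    (bookGraph m n k).Adj (.inl a) (.inl b) ↔ (b : ℕ) = a + 1 ∨ (a : ℕ) = b + 1 := by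
  simp only [bookGraph, SimpleGraph.fromRel_adj, ne_eq, Sum.inl.injEq, Fin.ext_iff]
  omega

@[simp] lemma bookGraph_adj_inl_inr {a : Fin k} {i : Fin n} {p : Fin (m - k)} :
    (bookGraph m n k).Adj (.inl a) (.inr (i, p)) ↔
      (a : ℕ) = 0 ∧ (p : ℕ) = 0 ∨ (a : ℕ) = k - 1 ∧ (p : ℕ) = m - k - 1 := by
  simp [bookGraph]

@[simp] lemma bookGraph_adj_inr_inl {a : Fin k} {i : Fin n} {p : Fin (m - k)} :
    (bookGraph m n k).Adj (.inr (i, p)) (.inl a) ↔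
      (a : ℕ) = 0 ∧ (p : ℕ) = 0 ∨ (a : ℕ) = k - 1 ∧ (p : ℕ) = m - k - 1 := by
  rw [SimpleGraph.adj_comm, bookGraph_adj_inl_inr]

@[simp] lemma bookGraph_adj_inr_inr {i i' : Fin n} {p p' : Fin (m - k)} :
    (bookGraph m n k).Adj (.inr (i, p)) (.inr (i', p')) ↔
      i = i' ∧ ((p' : ℕ) = p + 1 ∨ (p : ℕ) = p' + 1) := by
  simp only [bookGraph, SimpleGraph.fromRel_adj, ne_eq, Sum.inr.injEq, Prod.mk.injEq,
    Fin.ext_iff]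
  omega

section Signature

variable {l : ℕ} (hk : 0 < k) (hmk : 0 < m - k)

@[simp] lemma bookSigma_inl_inl (a b : Fin k) :
    bookSigma m n k l hk hmk s(.inl a, .inl b) = 1 := by
  simp [bookSigma]

@[simp] lemma bookSigma_inr_inr (x y : Fin n × Fin (m - k)) :
    bookSigma m n k l hk hmk s(.inr x, .inr y) = 1 := by
  simp [bookSigma]

@[simp] lemma bookSigma_inl_inr (a : Fin k) (i : Fin n) (p : Fin (m - k)) :
    bookSigma m n k l hk hmk s(.inl a, .inr (i, p)) =
      if (a : ℕ) = 0 ∧ (p : ℕ) = 0 ∧ (i : ℕ) < l then -1 else 1 := by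
  refine if_congr ?_ rfl rfl
  simp only [Sym2.eq_iff, Sum.inl.injEq, Sum.inr.injEq, Prod.mk.injEq, Fin.ext_iff, reduceCtorEq,
    false_and, or_false]
  exact ⟨fun ⟨j, hj, ha, hij, hp⟩ => ⟨ha, hp, hij ▸ hj⟩, fun ⟨ha, hp, hi⟩ => ⟨i, hi, ha, rfl, hp⟩⟩

end Signature

/-- Page `i` leaves `v₁` with colour `c i` (at both ends, the edge being negative), runs through
its interior with the constant colour `pathColor (e i)` and enters `v_k` with colour `e i` at its
page end (so `-e i` at `v_k`). -/
def bookColoring (c e : Fin n → ℤ) : BookVertex m n k → BookVertex m n k → ℤ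
  | .inl a, .inl b => if (b : ℕ) = a + 1 then 1 else -1
  | .inl a, .inr (i, _) => if (a : ℕ) = 0 then c i else -e i
  | .inr (i, _), .inl a => if (a : ℕ) = 0 then c i else e i
  | .inr (i, p), .inr (_, p') => if (p' : ℕ) = p + 1 then pathColor (e i) else -pathColor (e i)

variable {q : ℕ} {c e : Fin n → ℤ}

lemma bookColoring_mem (hq : 2 ≤ q) (hc : ∀ i, c i ∈ colorSet q) (he : ∀ i, e i ∈ colorSet q)
    (v w : BookVertex m n k) : bookColoring c e v w ∈ colorSet q := by
  have h1 := one_mem_colorSet hq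
  have hpath (i : Fin n) : pathColor (e i) ∈ colorSet q := by
    unfold pathColor; split_ifs <;> simp [h1]
  rcases v with a | ⟨i, p⟩ <;> rcases w with b | ⟨i', p'⟩ <;> simp only [bookColoring] <;>
    split_ifs <;> simp [h1, hc, he, hpath]

lemma bookColoring_sign (hk : 2 ≤ k) (hmk : 0 < m - k) {v w : BookVertex m n k}
    (hvw : (bookGraph m n k).Adj v w) :
    bookColoring c e v w =
      -(bookSigma m n k n (zero_lt_two.trans_le hk) hmk s(v, w) : ℤ) * bookColoring c e w v := by
  rcases v with a | ⟨i, p⟩ <;> rcases w with b | ⟨i', p'⟩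
  · simp only [bookGraph_adj_inl_inl] at hvw
    simp only [bookColoring, bookSigma_inl_inl, Units.val_one]
    split_ifs <;> omega
  · rcases bookGraph_adj_inl_inr.mp hvw with ⟨ha, hp⟩ | ⟨ha, -⟩
    · simp [bookColoring, ha, hp]
    · simp [bookColoring, show (a : ℕ) ≠ 0 by omega]
  · rcases bookGraph_adj_inr_inl.mp hvw with ⟨hb, hp⟩ | ⟨hb, -⟩
    · simp [bookColoring, Sym2.eq_swap, hb, hp]
    · simp [bookColoring, Sym2.eq_swap, show (b : ℕ) ≠ 0 by omega]
  · obtain ⟨rfl, hvw⟩ := bookGraph_adj_inr_inr.mp hvw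
    simp only [bookColoring, bookSigma_inr_inr, Units.val_one]
    split_ifs <;> omega

lemma bookColoring_ne_at_inl (hc : Function.Injective c) (he : Function.Injective e)
    (hc1 : ∀ i, c i ≠ 1) (he1 : ∀ i, e i ≠ 1) (hk : 2 ≤ k) {a : Fin k}
    {w₁ w₂ : BookVertex m n k} (h₁ : (bookGraph m n k).Adj (.inl a) w₁)
    (h₂ : (bookGraph m n k).Adj (.inl a) w₂) (hne : w₁ ≠ w₂) :
    bookColoring c e (.inl a) w₁ ≠ bookColoring c e (.inl a) w₂ := by
  rcases w₁ with b₁ | ⟨i₁, p₁⟩ <;> rcases w₂ with b₂ | ⟨i₂, p₂⟩ <;>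
    simp only [bookGraph_adj_inl_inl, bookGraph_adj_inl_inr] at h₁ h₂ <;>
    simp only [bookColoring, ne_eq, Sum.inl.injEq, Sum.inr.injEq, Prod.mk.injEq,
      Fin.ext_iff] at hne ⊢ <;>
    grind [Function.Injective]

lemma bookColoring_ne_at_inr (hc1 : ∀ i, c i ≠ 1) (hce : ∀ i, c i ≠ e i) (hk : 2 ≤ k)
    {x : Fin n × Fin (m - k)} {w₁ w₂ : BookVertex m n k}
    (h₁ : (bookGraph m n k).Adj (.inr x) w₁) (h₂ : (bookGraph m n k).Adj (.inr x) w₂)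
    (hne : w₁ ≠ w₂) : bookColoring c e (.inr x) w₁ ≠ bookColoring c e (.inr x) w₂ := by
  obtain ⟨i, p⟩ := x
  have := pathColor_ne (hc1 i) (hce i).symm
  rcases w₁ with b₁ | ⟨i₁, p₁⟩ <;> rcases w₂ with b₂ | ⟨i₂, p₂⟩ <;>
    simp only [bookGraph_adj_inr_inl, bookGraph_adj_inr_inr] at h₁ h₂ <;>
    simp only [bookColoring, ne_eq, Sum.inl.injEq, Sum.inr.injEq, Prod.mk.injEq,
      Fin.ext_iff] at hne ⊢ <;>
    grind [pathColor_ne_zero, pathColor_ne_neg]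

lemma exists_isProperSignedEdgeColoring_bookGraph (hn : 2 ≤ n) (hk : 2 ≤ k) (hmk : 0 < m - k) :
    ∃ γ, IsProperSignedEdgeColoring (bookGraph m n k)
      (bookSigma m n k n (zero_lt_two.trans_le hk) hmk) (n + 1) γ := by
  set s := (colorFinset (n + 1)).erase 1
  have hs : #s = n := by
    rw [card_erase_of_mem (mem_colorFinset.mpr (one_mem_colorSet (by omega))), card_colorFinset,
      Nat.add_sub_cancel]
  let c : Fin n → ℤ := s.orderEmbOfFin hs
  let e : Fin n → ℤ := c ∘ finRotate n
  have hc : Function.Injective c := (s.orderEmbOfFin hs).injective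
  have he : Function.Injective e := hc.comp (finRotate n).injective
  have hcs (i : Fin n) : c i ∈ colorSet (n + 1) ∧ c i ≠ 1 := by
    have := s.orderEmbOfFin_mem hs i
    rw [mem_erase, mem_colorFinset] at this
    exact this.symm
  have hce (i : Fin n) : c i ≠ e i := by
    refine hc.ne (Ne.symm (Equiv.Perm.mem_support.mp ?_))
    rw [support_finRotate_of_le hn]
    exact mem_univ i
  refine ⟨bookColoring c e, fun v w _ => ?_, fun _ _ => bookColoring_sign hk hmk,
    fun v w₁ w₂ => ?_⟩
  · exact bookColoring_mem (by omega) (fun i => (hcs i).1) (fun i => (hcs _).1) v w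
  · rcases v with a | x
    · exact bookColoring_ne_at_inl hc he (fun i => (hcs i).2) (fun i => (hcs _).2) hk
    · exact bookColoring_ne_at_inr (fun i => (hcs i).2) hce hk

lemma succ_le_degree_bookGraph (hk : 2 ≤ k) (hmk : 0 < m - k) :
    n + 1 ≤ (bookGraph m n k).degree (.inl ⟨0, zero_lt_two.trans_le hk⟩) := by
  let s : Finset (BookVertex m n k) :=
    insert (.inl ⟨1, hk⟩) (univ.image fun i => .inr (i, ⟨0, hmk⟩))
  calc n + 1 = #s := by
        rw [card_insert_of_notMem (by simp),
          card_image_of_injective _ (fun i j h => by simpa using h), card_univ, Fintype.card_fin]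
    _ ≤ _ := card_le_card fun w hw => by
        simp only [s, mem_insert, mem_image, mem_univ, true_and] at hw
        rcases hw with rfl | ⟨i, rfl⟩ <;> simp

end Book

/-- For all even `m ≥ 4` and all `n ≥ 2`, `k ≥ 2` with `m - k ≥ 1`, the
signed generalized book graph `(B(m,n,k), σ_n)`, whose negative edges are exactly
`v₁u₁ⁱ` for `1 ≤ i ≤ n`, has chromatic index `n + 1`. -/
theorem book_chromatic_index_sigma_n_even (m n k : ℕ)
    (hn : 2 ≤ n) (hk : 2 ≤ k) (hmk : 1 ≤ m - k) :
    signedChromaticIndex (bookGraph m n k)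
      (bookSigma m n k n (by omega) (by omega)) = n + 1 := by
  obtain ⟨γ, hγ⟩ := exists_isProperSignedEdgeColoring_bookGraph hn hk hmk
  exact signedChromaticIndex_eq hγ fun _ _ hγ' =>
    (succ_le_degree_bookGraph hk hmk).trans (hγ'.degree_le _)
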